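/- Let n ≥ 2 and let u : ℝⁿ → ℝ be convex and 1-Lipschitz, and suppose there is a constant C₀ with |u(x) - V₊(x)| ≤ C₀ for all x ∈ ℝⁿ. Then for every x̄ ∈ ℝ^{n-1} the limit ũ(x̄) := lim_{x₁ → -∞} u(x₁, x̄) exists, and for every R > 0 the convergence u(x₁, x̄) → ũ(x̄) as x₁ → -∞ is uniform on { x̄ ∈ ℝ^{n-1} : |x̄| ≤ R }. -/

import Mathlib

open Filter Real

/-- `V₊(x) = sup { x·λ : λ ∈ 𝕊^{n-1}, λ₁ ≥ 0 }`; explicitly `|x|` if `x₁ ≥ 0`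
and `|x̄|` if `x₁ < 0`. -/
noncomputable def Vplus (n : ℕ) [NeZero n] (x : EuclideanSpace ℝ (Fin n)) : ℝ :=
  if 0 ≤ x 0 then ‖x‖ else Real.sqrt (∑ i ∈ Finset.univ.erase (0 : Fin n), x i ^ 2)

/-- The point `(x₁, x̄) ∈ ℝ^{m+1}` built from `x₁ = t ∈ ℝ` and `x̄ ∈ ℝᵐ`. -/
noncomputable def embed (m : ℕ) (t : ℝ) (xb : EuclideanSpace ℝ (Fin m)) :
    EuclideanSpace ℝ (Fin (m + 1)) :=
  (WithLp.equiv 2 (Fin (m + 1) → ℝ)).symm (Fin.cases t fun j => xb j)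

/-! On every line `t ↦ u (t, x̄)` the function is convex and, for `t ≤ 0`, stays within `C₀` of
`V₊ = |x̄|`. A convex function of one variable that is bounded above on a half-line `(-∞, a]` is
nondecreasing (a decreasing secant would push it to `+∞` as `t → -∞`), so it converges at `-∞`
to its infimum. The slices are `1`-Lipschitz in `x̄` uniformly in `t`, hence equicontinuous, and
for an equicontinuous family pointwise convergence is uniform on compact sets. -/

open Set Topology

theorem ConvexOn.monotone_of_bddAbove_image_Iic {f : ℝ → ℝ} (hf : ConvexOn ℝ univ f) {a : ℝ}
    (hbdd : BddAbove (f '' Iic a)) : Monotone f := by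
  intro x y hxy
  by_contra! hyx
  have hxy' : x < y := hxy.lt_of_ne (by rintro rfl; exact hyx.false)
  set s := (f y - f x) / (y - x)
  have hs : s < 0 := div_neg_of_neg_of_pos (sub_neg.2 hyx) (sub_pos.2 hxy')
  have hline : Tendsto (fun t => f x + s * (t - x)) atBot atTop :=
    tendsto_atTop_add_const_left _ _ <|
      (tendsto_atBot_add_const_right _ (-x) tendsto_id).const_mul_atBot_of_neg hs
  obtain ⟨B, hB⟩ := hbdd
  obtain ⟨t, hBt, hta⟩ :=
    ((hline.eventually_gt_atTop B).and (eventually_le_atBot (min a x - 1))).exists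
  have htx : t < x := by linarith [min_le_right a x]
  have hslope : (f x - f t) / (x - t) ≤ s := hf.slope_mono_adjacent trivial trivial htx hxy'
  rw [div_le_iff₀ (sub_pos.2 htx)] at hslope
  have hft : f t ≤ B := hB ⟨t, mem_Iic.2 (by linarith [min_le_left a x]), rfl⟩
  linarith [show s * (t - x) = -(s * (x - t)) by ring]

theorem ConvexOn.exists_tendsto_atBot {f : ℝ → ℝ} (hf : ConvexOn ℝ univ f) {a : ℝ}
    (hbdd : Bornology.IsBounded (f '' Iic a)) : ∃ L, Tendsto f atBot (𝓝 L) := by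
  have hmono := hf.monotone_of_bddAbove_image_Iic hbdd.bddAbove
  obtain ⟨B, hB⟩ := hbdd.bddBelow
  have hrange : BddBelow (range f) := ⟨B, by
    rintro _ ⟨t, rfl⟩
    exact (hB ⟨min t a, min_le_right t a, rfl⟩).trans (hmono (min_le_left t a))⟩
  exact ⟨_, tendsto_atBot_ciInf hmono hrange⟩

theorem EquicontinuousOn.tendstoUniformlyOn_of_forall_tendsto {ι X α : Type*}
    [TopologicalSpace X] [UniformSpace α] {F : ι → X → α} {f : X → α} {l : Filter ι} {K : Set X}
    (hF : EquicontinuousOn F K) (hK : IsCompact K) (h : ∀ x ∈ K, Tendsto (F · x) l (𝓝 (f x))) :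
    TendstoUniformlyOn F f l K := by
  have := isCompact_iff_compactSpace.mp hK
  rw [tendstoUniformlyOn_iff_tendstoUniformly_comp_coe]
  have hFK : Equicontinuous (K.domRestrict ∘ F) := (equicontinuous_restrict_iff _).mpr hF
  exact UniformFun.tendsto_iff_tendstoUniformly.mp <|
    (hFK.tendsto_uniformFun_iff_pi l (K.domRestrict f)).mpr <| tendsto_pi_nhds.mpr fun x => h x x.2

namespace embed

variable {m : ℕ}

@[simp]
theorem apply_zero (t : ℝ) (xb : EuclideanSpace ℝ (Fin m)) : embed m t xb 0 = t := rfl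

@[simp]
theorem apply_succ (t : ℝ) (xb : EuclideanSpace ℝ (Fin m)) (j : Fin m) :
    embed m t xb j.succ = xb j := rfl

theorem add (t s : ℝ) (xb yb : EuclideanSpace ℝ (Fin m)) :
    embed m t xb + embed m s yb = embed m (t + s) (xb + yb) := by
  ext i
  cases i using Fin.cases <;> simp

theorem smul (c t : ℝ) (xb : EuclideanSpace ℝ (Fin m)) :
    c • embed m t xb = embed m (c * t) (c • xb) := by
  ext i
  cases i using Fin.cases <;> simp

theorem sub (t : ℝ) (xb yb : EuclideanSpace ℝ (Fin m)) :
    embed m t xb - embed m t yb = embed m 0 (xb - yb) := by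
  ext i
  cases i using Fin.cases <;> simp

theorem norm_zero_left (xb : EuclideanSpace ℝ (Fin m)) : ‖embed m 0 xb‖ = ‖xb‖ := by
  simp [EuclideanSpace.norm_eq, Fin.sum_univ_succ]

theorem isometry (t : ℝ) : Isometry (embed m t) :=
  Isometry.of_dist_eq fun xb yb => by rw [dist_eq_norm, dist_eq_norm, sub, norm_zero_left]

theorem lineMap_zero_one (t : ℝ) (xb : EuclideanSpace ℝ (Fin m)) :
    AffineMap.lineMap (embed m 0 xb) (embed m 1 xb) t = embed m t xb := by
  rw [AffineMap.lineMap_apply_module, smul, smul, add, ← add_smul]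
  simp

end embed

theorem Vplus_embed_of_nonpos {m : ℕ} {t : ℝ} (ht : t ≤ 0) (xb : EuclideanSpace ℝ (Fin m)) :
    Vplus (m + 1) (embed m t xb) = ‖xb‖ := by
  unfold Vplus
  split_ifs with h
  · obtain rfl : t = 0 := le_antisymm ht h
    exact embed.norm_zero_left xb
  · simp [Finset.sum_erase_eq_sub, Fin.sum_univ_succ, EuclideanSpace.norm_eq]

section Slices

variable {m : ℕ} {u : EuclideanSpace ℝ (Fin (m + 1)) → ℝ}

theorem ConvexOn.comp_embed (hconv : ConvexOn ℝ univ u) (xb : EuclideanSpace ℝ (Fin m)) :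
    ConvexOn ℝ univ fun t => u (embed m t xb) := by
  simpa [Function.comp_def, embed.lineMap_zero_one] using
    hconv.comp_affineMap (AffineMap.lineMap (embed m 0 xb) (embed m 1 xb))

theorem isBounded_image_Iic_zero_comp_embed {C₀ : ℝ}
    (hbd : ∀ x, |u x - Vplus (m + 1) x| ≤ C₀) (xb : EuclideanSpace ℝ (Fin m)) :
    Bornology.IsBounded ((fun t => u (embed m t xb)) '' Iic 0) :=
  (Metric.isBounded_closedBall (x := ‖xb‖) (r := C₀)).subset <| by
    rintro _ ⟨t, ht, rfl⟩
    rw [Metric.mem_closedBall, Real.dist_eq, ← Vplus_embed_of_nonpos ht]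
    exact hbd _

theorem LipschitzWith.equicontinuous_comp_embed (hlip : LipschitzWith 1 u) :
    Equicontinuous fun t xb => u (embed m t xb) :=
  (LipschitzWith.uniformEquicontinuous _ 1 fun t => by
    simpa [Function.comp_def] using hlip.comp (embed.isometry t).lipschitz).equicontinuous

end Slices

theorem cmc_slab_limit_exists_general (m : ℕ)
    (u : EuclideanSpace ℝ (Fin (m + 1)) → ℝ)
    (hconv : ConvexOn ℝ Set.univ u)
    (hlip : LipschitzWith 1 u)
    (C₀ : ℝ)
    (hbd : ∀ x : EuclideanSpace ℝ (Fin (m + 1)), |u x - Vplus (m + 1) x| ≤ C₀) :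
    ∃ ut : EuclideanSpace ℝ (Fin m) → ℝ,
      (∀ xb : EuclideanSpace ℝ (Fin m),
        Tendsto (fun t : ℝ => u (embed m t xb)) atBot (nhds (ut xb))) ∧
      ∀ R > (0 : ℝ),
        TendstoUniformlyOn (fun (t : ℝ) (xb : EuclideanSpace ℝ (Fin m)) => u (embed m t xb))
          ut atBot {xb : EuclideanSpace ℝ (Fin m) | ‖xb‖ ≤ R} := by
  have hlim : ∀ xb, ∃ L, Tendsto (fun t => u (embed m t xb)) atBot (𝓝 L) := fun xb =>
    (hconv.comp_embed xb).exists_tendsto_atBot (isBounded_image_Iic_zero_comp_embed hbd xb)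
  choose ut hut using hlim
  refine ⟨ut, hut, fun R _ => ?_⟩
  have hK : IsCompact {xb : EuclideanSpace ℝ (Fin m) | ‖xb‖ ≤ R} := by
    simpa only [Metric.closedBall, dist_zero_right] using
      isCompact_closedBall (0 : EuclideanSpace ℝ (Fin m)) R
  exact (hlip.equicontinuous_comp_embed.equicontinuousOn _).tendstoUniformlyOn_of_forall_tendsto
    hK fun xb _ => hut xb

/-- For a convex `1`-Lipschitz function `u` at bounded distance from `V₊`, the limit
`ũ(x̄) = lim_{x₁ → -∞} u(x₁, x̄)` exists, and the convergence is uniform on every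
ball `{|x̄| ≤ R}`. -/
theorem cmc_slab_limit_exists (m : ℕ) (hm : 1 ≤ m)
    (u : EuclideanSpace ℝ (Fin (m + 1)) → ℝ)
    (hconv : ConvexOn ℝ Set.univ u)
    (hlip : LipschitzWith 1 u)
    (C₀ : ℝ) (hC₀ : 0 < C₀)
    (hbd : ∀ x : EuclideanSpace ℝ (Fin (m + 1)), |u x - Vplus (m + 1) x| ≤ C₀) :
    ∃ ut : EuclideanSpace ℝ (Fin m) → ℝ,
      (∀ xb : EuclideanSpace ℝ (Fin m),
        Tendsto (fun t : ℝ => u (embed m t xb)) atBot (nhds (ut xb))) ∧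
      ∀ R > (0 : ℝ),
        TendstoUniformlyOn (fun (t : ℝ) (xb : EuclideanSpace ℝ (Fin m)) => u (embed m t xb))
          ut atBot {xb : EuclideanSpace ℝ (Fin m) | ‖xb‖ ≤ R} :=
  cmc_slab_limit_exists_general m u hconv hlip C₀ hbd
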